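/- Let D be the deterministic NEC automaton on {0,1}^{ℤ²}, let ε ∈ (0,1], and let μ be any probability measure on {0,1}^{ℤ²} invariant for the stochastic automaton N_ε D. Then for every integer L ≥ 1, μ(1_{S_{(−L,−L),L}}) ≥ μ(1_{SP_{(0,0),L}}) ≥ ε^{3(12L+1)}, where SP_{(0,0),L} = {(i,0) : −8L ≤ i ≤ 4L} ∪ {(0,j) : −8L ≤ j ≤ 4L} ∪ {(i,j) : i+j = 0, −6L ≤ i ≤ 6L}. -/

import Mathlib

open MeasureTheory ENNReal

namespace CAPaper

/-- Majority of three Boolean values: `1` iff at least two of them are `1`. -/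
def major (a b c : Bool) : Bool := (a && b) || ((a && c) || (b && c))

/-- The deterministic NEC (North-East-Center) automaton on `{0,1}^{ℤ²}`. -/
def Dnec (x : ℤ × ℤ → Bool) : ℤ × ℤ → Bool :=
  fun p => major (x (p.1, p.2 + 1)) (x (p.1 + 1, p.2)) (x (p.1, p.2))

/-- The deterministic NSMM (North-South maximum of minima) automaton on `{0,1}^{ℤ²}`. -/
def Dnsmm (x : ℤ × ℤ → Bool) : ℤ × ℤ → Bool :=
  fun p => max (min (x (p.1, p.2)) (x (p.1 + 1, p.2)))
               (min (x (p.1, p.2 + 1)) (x (p.1 + 1, p.2 + 1)))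

/-- Probability that, after the one-sided noise with parameter `ε` is applied to a
configuration whose value at a given site is `xi`, that site carries the value `b`. -/
noncomputable def noiseProb (ε : ℝ) (xi b : Bool) : ℝ≥0∞ :=
  if xi then (if b then 1 else 0)
  else (if b then ENNReal.ofReal ε else ENNReal.ofReal (1 - ε))

/-- `ν` is the result of one step of the stochastic automaton `N_ε D` applied to `μ`
(first apply `D`, then independent one-sided noise at every site); since the noise measure
is a product measure, this is equivalent to specifying all cylinder probabilities of `ν`. -/
def IsStep {ι : Type*} (ε : ℝ) (D : (ι → Bool) → (ι → Bool)) (μ ν : Measure (ι → Bool)) : Prop :=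
  ∀ (Λ : Finset ι) (b : ι → Bool),
    ν {y | ∀ i ∈ Λ, y i = b i} = ∫⁻ x, ∏ i ∈ Λ, noiseProb ε (D x i) (b i) ∂μ

/-- `μ` is invariant for the stochastic automaton `N_ε D`. -/
def Invariant {ι : Type*} (ε : ℝ) (D : (ι → Bool) → (ι → Bool)) (μ : Measure (ι → Bool)) : Prop :=
  IsStep ε D μ μ

/-- The cylinder event: all sites of `Λ` carry the value 1. -/
def ones {ι : Type*} (Λ : Set ι) : Set (ι → Bool) := {x | ∀ i ∈ Λ, x i = true}

/-- The finite spider `SP_{(0,0),L}` of Example 1. -/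
def SP (L : ℕ) : Set (ℤ × ℤ) :=
  {p | p.2 = 0 ∧ -8 * (L : ℤ) ≤ p.1 ∧ p.1 ≤ 4 * L} ∪
  {p | p.1 = 0 ∧ -8 * (L : ℤ) ≤ p.2 ∧ p.2 ≤ 4 * L} ∪
  {p | p.1 + p.2 = 0 ∧ -6 * (L : ℤ) ≤ p.1 ∧ p.1 ≤ 6 * L}


/-!
Under `N_ε D` noise only adds ones, so if `D` maps the all-ones event of `Λ'` into that of `Λ`,
invariance gives `μ(1_Λ') ≤ μ(1_Λ)`. Starting from all-ones on the horizontal and vertical arms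
of the spider, NEC shortens their positive ends by one site per step while filling in the
triangle between their negative ends; after `4L - 1` steps this covers the disc. The lower
bound is the noise alone: each site of the spider is switched on with probability at least `ε`,
independently.
-/

lemma ones_anti {ι : Type*} {Λ Λ' : Set ι} (h : Λ ⊆ Λ') : ones Λ' ⊆ ones Λ :=
  fun _ hx i hi => hx i (h hi)

lemma measurableSet_ones {ι : Type*} {Λ : Set ι} (hΛ : Λ.Countable) :
    MeasurableSet (ones Λ) := by
  have h : ones Λ = ⋂ i ∈ Λ, (fun x : ι → Bool => x i) ⁻¹' {true} := by
    ext x; simp [ones]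
  rw [h]
  exact .biInter hΛ fun i _ => measurable_pi_apply i (measurableSet_singleton true)

namespace IsStep

variable {ι : Type*} {ε : ℝ} {D : (ι → Bool) → (ι → Bool)} {μ ν : Measure (ι → Bool)}

lemma measure_ones_eq (h : IsStep ε D μ ν) {Λ : Set ι} (hΛ : Λ.Finite) :
    ν (ones Λ) = ∫⁻ x, ∏ i ∈ hΛ.toFinset, noiseProb ε (D x i) true ∂μ := by
  simpa [ones] using h hΛ.toFinset fun _ => true

/-- Noise never turns a `1` into a `0`, so whatever `D` maps into `ones Λ` stays there. -/
lemma measure_le_of_mapsTo (h : IsStep ε D μ ν) {A : Set (ι → Bool)} (hA : MeasurableSet A)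
    {Λ : Set ι} (hΛ : Λ.Finite) (hD : Set.MapsTo D A (ones Λ)) : μ A ≤ ν (ones Λ) := by
  rw [h.measure_ones_eq hΛ]
  calc μ A = ∫⁻ _ in A, 1 ∂μ := (setLIntegral_one A).symm
    _ = ∫⁻ x in A, ∏ i ∈ hΛ.toFinset, noiseProb ε (D x i) true ∂μ := by
        refine setLIntegral_congr_fun hA fun x hx => (Finset.prod_eq_one fun i hi => ?_).symm
        simp [noiseProb, hD hx i (hΛ.mem_toFinset.1 hi)]
    _ ≤ _ := setLIntegral_le_lintegral _ _

lemma ofReal_pow_ncard_le (h : IsStep ε D μ ν) [IsProbabilityMeasure μ] (hε1 : ε ≤ 1)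
    {Λ : Set ι} (hΛ : Λ.Finite) : ENNReal.ofReal ε ^ Λ.ncard ≤ ν (ones Λ) := by
  have noise_ge (b : Bool) : ENNReal.ofReal ε ≤ noiseProb ε b true := by
    cases b <;> simp [noiseProb, hε1]
  rw [h.measure_ones_eq hΛ, Set.ncard_eq_toFinset_card Λ hΛ, ← Finset.prod_const]
  calc ∏ _ ∈ hΛ.toFinset, ENNReal.ofReal ε
      = ∫⁻ _, ∏ _ ∈ hΛ.toFinset, ENNReal.ofReal ε ∂μ := by simp
    _ ≤ _ := lintegral_mono fun x => Finset.prod_le_prod' fun i _ => noise_ge _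

end IsStep

/-- After `t` NEC steps from all-ones on the legs of `SP L`: the legs shortened by `t` at their
positive ends, plus the triangle `i, j ≤ -1, i + j ≥ -t - 1` filled in between the negative legs. -/
def erodedSpider (L t : ℕ) : Set (ℤ × ℤ) :=
  {p | p.2 = 0 ∧ -8 * (L : ℤ) ≤ p.1 ∧ p.1 ≤ 4 * L - t} ∪
  {p | p.1 = 0 ∧ -8 * (L : ℤ) ≤ p.2 ∧ p.2 ≤ 4 * L - t} ∪
  {p | -8 * (L : ℤ) ≤ p.1 ∧ p.1 ≤ -1 ∧ -8 * (L : ℤ) ≤ p.2 ∧ p.2 ≤ -1 ∧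
    -(t : ℤ) - 1 ≤ p.1 + p.2}

lemma mem_erodedSpider {L t : ℕ} {i j : ℤ} : (i, j) ∈ erodedSpider L t ↔
    (j = 0 ∧ -8 * (L : ℤ) ≤ i ∧ i ≤ 4 * L - t) ∨ (i = 0 ∧ -8 * (L : ℤ) ≤ j ∧ j ≤ 4 * L - t) ∨
      (-8 * (L : ℤ) ≤ i ∧ i ≤ -1 ∧ -8 * (L : ℤ) ≤ j ∧ j ≤ -1 ∧ -(t : ℤ) - 1 ≤ i + j) := by
  simp only [erodedSpider, Set.mem_union, Set.mem_ofPred, or_assoc]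

lemma two_neighbours_mem_erodedSpider {L t : ℕ} (ht : t + 1 ≤ 4 * L) {i j : ℤ}
    (h : (i, j) ∈ erodedSpider L (t + 1)) :
    ((i, j + 1) ∈ erodedSpider L t ∧ (i + 1, j) ∈ erodedSpider L t) ∨
      ((i, j + 1) ∈ erodedSpider L t ∧ (i, j) ∈ erodedSpider L t) ∨
      ((i + 1, j) ∈ erodedSpider L t ∧ (i, j) ∈ erodedSpider L t) := by
  simp only [mem_erodedSpider] at h ⊢
  push_cast at h
  rcases h with h | h | h
  · right; right; constructor <;> omega
  · right; left; constructor <;> omega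
  · -- inside the triangle the north and east neighbours survive, via the negative arms at the rim
    left; constructor <;> omega

lemma erodedSpider_finite (L t : ℕ) : (erodedSpider L t).Finite := by
  refine (Set.finite_Icc ((-8 * (L : ℤ), -8 * (L : ℤ))) (4 * L, 4 * L)).subset ?_
  rintro ⟨i, j⟩ h
  rw [mem_erodedSpider] at h
  simp only [Set.mem_Icc, Prod.mk_le_mk]
  omega

lemma mapsTo_dnec_ones_erodedSpider {L t : ℕ} (ht : t + 1 ≤ 4 * L) :
    Set.MapsTo Dnec (ones (erodedSpider L t)) (ones (erodedSpider L (t + 1))) := by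
  rintro x hx ⟨i, j⟩ hij
  rcases two_neighbours_mem_erodedSpider ht hij with ⟨h₁, h₂⟩ | ⟨h₁, h₂⟩ | ⟨h₁, h₂⟩ <;>
    simp [Dnec, major, hx _ h₁, hx _ h₂]

lemma erodedSpider_zero_subset_SP (L : ℕ) : erodedSpider L 0 ⊆ SP L := by
  rintro ⟨i, j⟩ h
  rw [mem_erodedSpider] at h
  simp only [SP, Set.mem_union, Set.mem_ofPred]
  omega

lemma measure_ones_SP_le_erodedSpider {ε : ℝ} {μ : Measure (ℤ × ℤ → Bool)}
    (hinv : Invariant ε Dnec μ) {L t : ℕ} (ht : t + 1 ≤ 4 * L) :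
    μ (ones (SP L)) ≤ μ (ones (erodedSpider L t)) := by
  induction t with
  | zero => exact measure_mono (ones_anti (erodedSpider_zero_subset_SP L))
  | succ t ih =>
    exact (ih (by omega)).trans <| hinv.measure_le_of_mapsTo
      (measurableSet_ones (erodedSpider_finite L t).countable) (erodedSpider_finite L (t + 1))
      (mapsTo_dnec_ones_erodedSpider (by omega))

/-- The disc lies in the square `[-2L, 0]²`, which is covered at time `4L - 1`. -/
lemma ball_subset_erodedSpider {L : ℕ} (hL : 1 ≤ L) :
    {p : ℤ × ℤ | Real.sqrt (((p.1 : ℝ) + L) ^ 2 + ((p.2 : ℝ) + L) ^ 2) ≤ L} ⊆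
      erodedSpider L (4 * L - 1) := by
  rintro ⟨a, b⟩ hp
  have hR : ((a : ℝ) + L) ^ 2 + ((b : ℝ) + L) ^ 2 ≤ (L : ℝ) ^ 2 :=
    (Real.sqrt_le_left (by positivity)).1 hp
  have hZ : (a + L) ^ 2 + (b + L) ^ 2 ≤ (L : ℤ) ^ 2 := by exact_mod_cast hR
  have ha : -2 * (L : ℤ) ≤ a ∧ a ≤ 0 := by
    constructor <;> nlinarith [sq_nonneg (b + L)]
  have hb : -2 * (L : ℤ) ≤ b ∧ b ≤ 0 := by
    constructor <;> nlinarith [sq_nonneg (a + L)]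
  rw [mem_erodedSpider, Nat.cast_sub (by omega)]
  push_cast
  omega

lemma SP_subset (L : ℕ) : SP L ⊆
    (fun i => (i, 0)) '' Set.Icc (-8 * (L : ℤ)) (4 * L) ∪
      (fun j => (0, j)) '' Set.Icc (-8 * (L : ℤ)) (4 * L) ∪
      (fun i => (i, -i)) '' Set.Icc (-6 * (L : ℤ)) (6 * L) := by
  rintro ⟨i, j⟩ ((⟨rfl, h⟩ | ⟨rfl, h⟩) | ⟨h, h'⟩)
  · exact .inl (.inl ⟨i, h, rfl⟩)
  · exact .inl (.inr ⟨j, h, rfl⟩)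
  · dsimp only at h
    exact .inr ⟨i, h', Prod.ext rfl (by dsimp only; omega)⟩

lemma SP_finite (L : ℕ) : (SP L).Finite :=
  (Set.toFinite _).subset (SP_subset L)

lemma ncard_SP_le (L : ℕ) : (SP L).ncard ≤ 3 * (12 * L + 1) := by
  have ncard_Icc (a b : ℤ) : (Set.Icc a b).ncard = (b + 1 - a).toNat := by
    rw [← Finset.coe_Icc, Set.ncard_coe_finset, Int.card_Icc]
  calc (SP L).ncard
      ≤ _ := (Set.ncard_le_ncard (SP_subset L)).trans <|
        (Set.ncard_union_le _ _).trans <| add_le_add_left (Set.ncard_union_le _ _) _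
    _ ≤ _ := add_le_add (add_le_add Set.ncard_image_le Set.ncard_image_le) Set.ncard_image_le
    _ = 3 * (12 * L + 1) := by simp only [ncard_Icc]; omega

theorem stmt12_general (ε : ℝ) (hε1 : ε ≤ 1)
    (μ : Measure (ℤ × ℤ → Bool)) (hprob : IsProbabilityMeasure μ)
    (hinv : Invariant ε Dnec μ) (L : ℕ) (hL : 1 ≤ L) :
    μ (ones (SP L)) ≤
        μ (ones {p : ℤ × ℤ |
          Real.sqrt (((p.1 : ℝ) + L) ^ 2 + ((p.2 : ℝ) + L) ^ 2) ≤ L}) ∧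
      ENNReal.ofReal ε ^ (3 * (12 * L + 1)) ≤ μ (ones (SP L)) := by
  constructor
  · calc μ (ones (SP L)) ≤ μ (ones (erodedSpider L (4 * L - 1))) :=
          measure_ones_SP_le_erodedSpider hinv (by omega)
      _ ≤ _ := measure_mono (ones_anti (ball_subset_erodedSpider hL))
  · calc ENNReal.ofReal ε ^ (3 * (12 * L + 1)) ≤ ENNReal.ofReal ε ^ (SP L).ncard :=
          pow_le_pow_of_le_one zero_le (ENNReal.ofReal_le_one.2 hε1) (ncard_SP_le L)
      _ ≤ μ (ones (SP L)) := hinv.ofReal_pow_ncard_le hε1 (SP_finite L)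

/-- every invariant probability measure of the NEC automaton with one-sided
noise `ε` satisfies `μ(1_{S_{(−L,−L),L}}) ≥ μ(1_{SP_{(0,0),L}}) ≥ ε^{3(12L+1)}`. -/
theorem stmt12 (ε : ℝ) (hε : 0 < ε) (hε1 : ε ≤ 1)
    (μ : Measure (ℤ × ℤ → Bool)) (hprob : IsProbabilityMeasure μ)
    (hinv : Invariant ε Dnec μ) (L : ℕ) (hL : 1 ≤ L) :
    μ (ones (SP L)) ≤
        μ (ones {p : ℤ × ℤ |
          Real.sqrt (((p.1 : ℝ) + L) ^ 2 + ((p.2 : ℝ) + L) ^ 2) ≤ L}) ∧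
      ENNReal.ofReal ε ^ (3 * (12 * L + 1)) ≤ μ (ones (SP L)) :=
  stmt12_general ε hε1 μ hprob hinv L hL

end CAPaper
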